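/- arXiv:1210.2743 — 5 statements merged into one kernel-verified Lean document; each statement's English description precedes it below -/
import Mathlib

section
/- Let K be a field, let m ≥ 2 be an integer, and let ζ ∈ K be a primitive m-th root of unity. Let G be a finite abelian group (written additively), let T be a subgroup of G of index m, and let Q ∈ G be an element whose image generates the cyclic quotient G/T (so jQ ∈ T if and only if m divides j). For R ∈ G, let j(R) ∈ {0, 1, …, m−1} be the unique exponent with R − j(R)Q ∈ T, and set χ(R) = ζ^{j(R)}. Suppose x : G ∖ {0} → K satisfies x(−R) = x(R) for all R ≠ 0, and suppose y₁, …, y_{m−1} ∈ K satisfy the Vélu relation y_j = x(jQ) + ∑_{S ∈ T, S ≠ 0} ( x(jQ + S) − x(S) ) for each 1 ≤ j ≤ m−1 (note that jQ + S ≠ 0 for such j and S, since jQ ∉ T). Then ∑_{R ∈ G, R ≠ 0} χ(R)·x(R) = ∑_{j=1}^{m−1} ζ^j · y_j. -/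
open Finset

/-- **Group-theoretic core of Theorem 3.1 (Moody–Rasmussen).**
`T ≤ G` has index `m`, the image of `Q` generates the cyclic quotient `G/T`,
`j R` is the unique exponent in `{0, …, m-1}` with `R - j R • Q ∈ T`, the character is
`χ R = ζ ^ j R`, `x` is symmetric under negation away from `0`, and the `y i` satisfy
Vélu's relation. Then the weighted character sum over `G \ {0}` equals
`∑_{i=1}^{m-1} ζ^i y i`. -/
theorem charSum_eq_of_velu {K : Type*} [Field K] {G : Type*} [AddCommGroup G] [Fintype G]
    [DecidableEq G] (m : ℕ) (hm : 2 ≤ m) (ζ : K) (hζ : IsPrimitiveRoot ζ m)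
    (T : AddSubgroup G) [DecidablePred (· ∈ T)] (hT : T.index = m)
    (Q : G) (hQ : ∀ i : ℕ, i • Q ∈ T ↔ m ∣ i)
    (j : G → ℕ) (hjlt : ∀ R : G, j R < m) (hjT : ∀ R : G, R - j R • Q ∈ T)
    (x : G → K) (hx : ∀ R : G, R ≠ 0 → x (-R) = x R)
    (y : ℕ → K)
    (hy : ∀ i : ℕ, 1 ≤ i → i ≤ m - 1 →
      y i = x (i • Q) + ∑ S ∈ univ.filter fun S : G => S ∈ T ∧ S ≠ 0,
        (x (i • Q + S) - x S)) :
    ∑ R ∈ univ.filter fun R : G => R ≠ 0, ζ ^ j R * x R =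
      ∑ i ∈ Icc 1 (m - 1), ζ ^ i * y i := by
  classical
  set Sx := ∑ S ∈ univ.filter fun S : G => S ∈ T ∧ S ≠ 0, x S with hSx
  -- uniqueness of the exponent
  have main : ∀ a b : ℕ, a ≤ b → b < m → ∀ R : G,
      R - a • Q ∈ T → R - b • Q ∈ T → a = b := by
    intro a b hab hb R hA hB
    have h1 : (b - a) • Q ∈ T := by
      have h2 := T.sub_mem hA hB
      have e : R - a • Q - (R - b • Q) = (b - a) • Q := by
        rw [sub_nsmul Q hab]; abel
      rwa [e] at h2
    have hd := (hQ _).1 h1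
    have := Nat.eq_zero_of_dvd_of_lt hd (by omega)
    omega
  have key : ∀ a b : ℕ, a < m → b < m → ∀ R : G,
      R - a • Q ∈ T → R - b • Q ∈ T → a = b := by
    intro a b ha hb R hA hB
    rcases le_total a b with h | h
    · exact main a b h hb R hA hB
    · exact (main b a h ha R hB hA).symm
  have hjval : ∀ i : ℕ, i < m → ∀ S : G, S ∈ T → j (i • Q + S) = i := by
    intro i hi S hS
    exact key _ _ (hjlt _) hi _ (hjT _) (by simpa using hS)
  -- the fiber over 0
  have hfib0 : (univ.filter fun R : G => R ≠ 0 ∧ j R = 0) =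
      univ.filter fun S : G => S ∈ T ∧ S ≠ 0 := by
    ext R
    simp only [mem_filter, mem_univ, true_and]
    constructor
    · rintro ⟨h0, hj0⟩
      refine ⟨?_, h0⟩
      have := hjT R
      rwa [hj0, zero_smul, sub_zero] at this
    · rintro ⟨hRT, h0⟩
      exact ⟨h0, key _ 0 (hjlt _) (by omega) R (hjT R) (by simpa using hRT)⟩
  -- the fibers over 1 ≤ i ≤ m - 1
  have hfibi : ∀ i : ℕ, 1 ≤ i → i ≤ m - 1 →
      ∑ R ∈ univ.filter (fun R : G => R ≠ 0 ∧ j R = i), x R = y i + Sx := by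
    intro i hi1 hi2
    have him : i < m := by omega
    have hiQ : ¬ i • Q ∈ T := by
      rw [hQ]; intro hdvd
      have := Nat.eq_zero_of_dvd_of_lt hdvd him
      omega
    have himg : (univ.filter fun R : G => R ≠ 0 ∧ j R = i) =
        (univ.filter fun S : G => S ∈ T).image (fun S => i • Q + S) := by
      ext R
      simp only [mem_filter, mem_univ, true_and, mem_image]
      constructor
      · rintro ⟨h0, hji⟩
        refine ⟨R - i • Q, ?_, by abel⟩
        have := hjT R; rwa [hji] at this
      · rintro ⟨S, hS, rfl⟩
        refine ⟨?_, hjval i him S hS⟩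
        intro h0
        apply hiQ
        have hiq : i • Q = -S := by
          rw [eq_neg_iff_add_eq_zero]
          exact h0
        rw [hiq]
        exact T.neg_mem hS
    rw [himg, sum_image (by intro a _ b _ h; exact add_left_cancel h)]
    -- split off S = 0
    have hTsplit : (univ.filter fun S : G => S ∈ T) =
        insert 0 (univ.filter fun S : G => S ∈ T ∧ S ≠ 0) := by
      ext S
      simp only [mem_filter, mem_univ, true_and, mem_insert]
      constructor
      · intro hS
        by_cases h0 : S = 0
        · exact Or.inl h0
        · exact Or.inr ⟨hS, h0⟩
      · rintro (rfl | ⟨hS, _⟩)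
        · exact T.zero_mem
        · exact hS
    rw [hTsplit, sum_insert (by simp), add_zero]
    have := hy i hi1 hi2
    rw [sum_sub_distrib] at this
    rw [hy i hi1 hi2, sum_sub_distrib, ← hSx]
    ring
  -- partition the full sum by fibers of j
  rw [← sum_fiberwise_of_maps_to (g := j) (t := range m)
      (fun R _ => mem_range.2 (hjlt R)) (fun R => ζ ^ j R * x R)]
  have hinner : ∀ i ∈ range m,
      ∑ R ∈ (univ.filter fun R : G => R ≠ 0).filter (fun R => j R = i),
        ζ ^ j R * x R
      = ζ ^ i * ∑ R ∈ univ.filter (fun R : G => R ≠ 0 ∧ j R = i), x R := by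
    intro i _
    rw [filter_filter, mul_sum]
    exact sum_congr rfl (fun R hR => by
      rw [(mem_filter.1 hR).2.2])
  rw [sum_congr rfl hinner]
  have hins : range m = insert 0 (Icc 1 (m - 1)) := by
    ext i
    simp only [mem_range, mem_insert, mem_Icc]
    omega
  have hgeom : ∑ i ∈ range m, ζ ^ i = 0 := hζ.geom_sum_eq_zero (by omega)
  rw [hins, sum_insert (by simp), hfib0, ← hSx]
  rw [sum_congr rfl (fun i hi => by
    rw [hfibi i (mem_Icc.1 hi).1 (mem_Icc.1 hi).2])]
  have hz : ζ ^ 0 + ∑ i ∈ Icc 1 (m - 1), ζ ^ i = 0 := by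
    rw [← sum_insert (by simp : (0:ℕ) ∉ Icc 1 (m-1)), ← hins, hgeom]
  simp only [mul_add, sum_add_distrib]
  have : (∑ i ∈ Icc 1 (m - 1), ζ ^ i * Sx) = (∑ i ∈ Icc 1 (m - 1), ζ ^ i) * Sx := by
    rw [sum_mul]
  rw [this]
  have h0 : ζ ^ 0 * Sx + (∑ i ∈ Icc 1 (m - 1), ζ ^ i) * Sx = 0 := by
    rw [← add_mul, hz, zero_mul]
  linear_combination h0
end

section
/- Let F be a field and let α, β ∈ F be such that the Weierstrass curve E : y² + αxy + βy = x³ over F is nonsingular (i.e., its discriminant is nonzero). Then the point P = (0, 0) lies on E and has exact order 3 in the group of points E(F). -/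
/-!
When `a₂ = a₄ = 0`, the tangent to the curve at the origin is the line `y = 0`, which meets the
curve in `x³ = 0`: the origin is a flex, so `2P = -P` and `P` has order 3. For the curve
`y² + αxy + βy = x³` the discriminant is `β³(α³ - 27β)`, so `β ≠ 0`, which makes the origin a
nonsingular point.
-/

namespace WeierstrassCurve

lemma Δ_of_a₂_a₄_a₆_eq_zero {R : Type*} [CommRing R] (a₁ a₃ : R) :
    (⟨a₁, 0, a₃, 0, 0⟩ : WeierstrassCurve R).Δ = a₃ ^ 3 * (a₁ ^ 3 - 27 * a₃) := by
  simp only [Δ, b₂, b₄, b₆, b₈]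
  ring

namespace Affine

variable {F : Type*} [Field F] [DecidableEq F] {W : Affine F}

lemma slope_zero_zero (h₃ : W.a₃ ≠ 0) (h₄ : W.a₄ = 0) : W.slope 0 0 0 0 = 0 := by
  rw [slope_of_Y_ne rfl (by simpa [negY, eq_comm] using h₃)]
  simp [h₄]

namespace Point

lemma add_self_some_zero_zero (h₂ : W.a₂ = 0) (h₄ : W.a₄ = 0) {h : W.Nonsingular 0 0} :
    some 0 0 h + some 0 0 h = -some 0 0 h := by
  have h₃ : W.a₃ ≠ 0 := by simpa [h₄] using (nonsingular_zero.mp h).2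
  rw [add_self_of_Y_ne' (by simpa [negY, eq_comm] using h₃)]
  simp [addX, negAddY, slope_zero_zero h₃ h₄, h₂]

lemma addOrderOf_some_zero_zero (h₂ : W.a₂ = 0) (h₄ : W.a₄ = 0) {h : W.Nonsingular 0 0} :
    addOrderOf (some 0 0 h) = 3 := by
  have : Fact (Nat.Prime 3) := ⟨Nat.prime_three⟩
  refine addOrderOf_eq_prime ?_ (some_ne_zero h)
  rw [show 3 = 2 + 1 from rfl, succ_nsmul, two_nsmul, add_self_some_zero_zero h₂ h₄,
    neg_add_cancel]

end Point

end Affine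

end WeierstrassCurve

open Classical in
/-- **The `m = 3` family of Table 2.** On the nonsingular Weierstrass curve
`y² + αxy + βy = x³`, the point `P = (0, 0)` is a nonsingular point of exact order 3. -/
theorem order_three_family {F : Type*} [Field F] (α β : F)
    (W : WeierstrassCurve.Affine F)
    (hW : W = { a₁ := α, a₂ := 0, a₃ := β, a₄ := 0, a₆ := 0 })
    (hΔ : W.Δ ≠ 0) :
    ∃ h : W.Nonsingular 0 0, addOrderOf (WeierstrassCurve.Affine.Point.some _ _ h) = 3 := by
  subst hW
  have hβ : β ≠ 0 := by
    rintro rfl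
    simp [WeierstrassCurve.Δ_of_a₂_a₄_a₆_eq_zero] at hΔ
  exact ⟨WeierstrassCurve.Affine.nonsingular_zero.mpr ⟨rfl, .inl hβ⟩,
    WeierstrassCurve.Affine.Point.addOrderOf_some_zero_zero rfl rfl⟩
end

section
/- Let F be a field and let α ∈ F be such that the Weierstrass curve E : y² + xy − αy = x³ − αx² over F is nonsingular (i.e., its discriminant is nonzero). Then the point P = (0, 0) lies on E, has exact order 4 in the group of points E(F), and the x-coordinate of 2P equals α. -/
/-- The `x`-coordinate of a nonsingular rational point on a Weierstrass curve
(with the point at infinity sent to `0`). -/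
noncomputable def ptX {F : Type*} [Field F] {W : WeierstrassCurve.Affine F} : W.Point → F
  | .zero => 0
  | .some x _ _ => x

/-!
On a curve with `a₄ = a₆ = 0` the tangent line at `P = (0, 0)` is the horizontal line `y = 0`
(nonsingularity forces `a₃ ≠ 0`), so doubling gives `2P = (-a₂, a₁a₂ - a₃)`. This point is
`2`-torsion exactly when it lies on the vertical line through its negative, i.e. when
`a₁a₂ = a₃`; then `P` has order `4`. The curve of the theorem has `a₁a₂ = -α = a₃` and `-a₂ = α`,
and `(0, 0)` is nonsingular on it because `Δ ≠ 0`.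
-/

namespace WeierstrassCurve.Affine

variable {F : Type*} [Field F] [DecidableEq F] {W : WeierstrassCurve.Affine F}

lemma two_smul_some_zero_zero (ha₄ : W.a₄ = 0) (h : W.Nonsingular 0 0) :
    ∃ h₂ : W.Nonsingular (-W.a₂) (W.a₁ * W.a₂ - W.a₃),
      2 • Point.some _ _ h = Point.some _ _ h₂ := by
  have ha₃ : W.a₃ ≠ 0 := by simpa [ha₄] using (nonsingular_zero.mp h).2
  have hy : (0 : F) ≠ W.negY 0 0 := by simpa [negY] using ha₃
  have hslope : W.slope 0 0 0 0 = 0 := by simp [slope_of_Y_ne rfl hy, ha₄]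
  have hx₂ : W.addX 0 0 (W.slope 0 0 0 0) = -W.a₂ := by simp [hslope, addX]
  have hy₂ : W.addY 0 0 0 (W.slope 0 0 0 0) = W.a₁ * W.a₂ - W.a₃ := by
    rw [addY, negAddY, negY, hx₂, hslope]; ring
  have h₂ := nonsingular_add h h fun hxy => hy hxy.right
  rw [hx₂, hy₂] at h₂
  refine ⟨h₂, ?_⟩
  rw [two_smul, Point.add_self_of_Y_ne hy, Point.some.injEq]
  exact ⟨hx₂, hy₂⟩

lemma addOrderOf_some_zero_zero (ha₄ : W.a₄ = 0) (ha₁a₂ : W.a₁ * W.a₂ = W.a₃)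
    (h : W.Nonsingular 0 0) : addOrderOf (Point.some _ _ h) = 4 := by
  obtain ⟨h₂, h2P⟩ := two_smul_some_zero_zero ha₄ h
  have h2P_ne : 2 ^ 1 • Point.some _ _ h ≠ 0 := by
    rw [pow_one, h2P]; exact Point.some_ne_zero h₂
  have h4P : 2 ^ 2 • Point.some _ _ h = 0 := by
    rw [sq, mul_smul, h2P, two_smul]
    exact Point.add_self_of_Y_eq (by rw [negY]; linear_combination ha₁a₂)
  exact addOrderOf_eq_prime_pow h2P_ne h4P

end WeierstrassCurve.Affine

open WeierstrassCurve.Affine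

open Classical in
/-- **The first `m = 4` family of Table 2.** On the nonsingular Weierstrass curve
`y² + xy - αy = x³ - αx²`, the point `P = (0, 0)` is a nonsingular point of exact order 4,
and the `x`-coordinate of `2P` is `α`. -/
theorem order_four_family {F : Type*} [Field F] (α : F)
    (W : WeierstrassCurve.Affine F)
    (hW : W = { a₁ := 1, a₂ := -α, a₃ := -α, a₄ := 0, a₆ := 0 })
    (hΔ : W.Δ ≠ 0) :
    ∃ h : W.Nonsingular 0 0, addOrderOf (WeierstrassCurve.Affine.Point.some _ _ h) = 4 ∧
      ptX (2 • WeierstrassCurve.Affine.Point.some _ _ h) = α := by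
  subst hW
  have h : Nonsingular { a₁ := 1, a₂ := -α, a₃ := -α, a₄ := 0, a₆ := 0 } 0 0 :=
    (equation_iff_nonsingular_of_Δ_ne_zero hΔ).mp (equation_zero.mpr rfl)
  obtain ⟨_, h2P⟩ := two_smul_some_zero_zero rfl h
  refine ⟨h, addOrderOf_some_zero_zero rfl (one_mul _) h, ?_⟩
  rw [h2P]
  exact neg_neg α
end

section
/- Let F be a field and let α ∈ F be such that the Weierstrass curve E : y² = x³ + (1 − 2α)x² + α²x over F is nonsingular (i.e., its discriminant is nonzero). Then the point P = (α, α) lies on E, has exact order 4 in the group of points E(F), and 2P = (0, 0); in particular the x-coordinate of 2P equals 0. -/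
theorem addOrderOf_eq_four {G : Type*} [AddMonoid G] {x : G} (h2 : 2 • x ≠ 0)
    (h4 : 2 • 2 • x = 0) : addOrderOf x = 4 := by
  have : Fact (Nat.Prime 2) := ⟨Nat.prime_two⟩
  exact addOrderOf_eq_prime_pow (p := 2) (n := 1) (by rwa [pow_one])
    (by rwa [pow_succ, pow_one, mul_nsmul])

namespace WeierstrassCurve.Affine

variable {F : Type*} [Field F]

lemma Point.two_nsmul_some_of_Y_eq [DecidableEq F] {W : Affine F} {x y : F}
    {h : W.Nonsingular x y} (hy : y = W.negY x y) : 2 • Point.some x y h = 0 := by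
  rw [two_nsmul, Point.add_self_of_Y_eq hy]

@[simps]
def orderFourCurve (α : F) : Affine F :=
  { a₁ := 0, a₂ := 1 - 2 * α, a₃ := 0, a₄ := α ^ 2, a₆ := 0 }

variable (α : F)

lemma orderFourCurve_Δ : (orderFourCurve α).Δ = 16 * α ^ 4 * (1 - 4 * α) := by
  simp only [Δ, b₂, b₄, b₆, b₈, orderFourCurve_a₁, orderFourCurve_a₂, orderFourCurve_a₃,
    orderFourCurve_a₄, orderFourCurve_a₆]
  ring

lemma two_mul_ne_zero_of_orderFourCurve_Δ_ne_zero (hΔ : (orderFourCurve α).Δ ≠ 0) :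
    2 * α ≠ 0 := by
  rintro h
  apply hΔ
  rw [orderFourCurve_Δ]
  linear_combination 8 * α ^ 3 * (1 - 4 * α) * h

lemma orderFourCurve_equation : (orderFourCurve α).Equation α α := by
  rw [equation_iff]
  simp only [orderFourCurve_a₁, orderFourCurve_a₂, orderFourCurve_a₃, orderFourCurve_a₄,
    orderFourCurve_a₆]
  ring

lemma orderFourCurve_negY_self : (orderFourCurve α).negY α α = -α := by
  simp [negY]

lemma orderFourCurve_negY_zero : (orderFourCurve α).negY 0 0 = 0 := by
  simp [negY]

variable [DecidableEq F] {α}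

lemma orderFourCurve_slope (h2α : 2 * α ≠ 0) : (orderFourCurve α).slope α α α α = 1 := by
  have hden : α - (orderFourCurve α).negY α α ≠ 0 := by
    rwa [orderFourCurve_negY_self, sub_neg_eq_add, ← two_mul]
  rw [slope_of_Y_ne rfl (sub_ne_zero.mp hden), div_eq_one_iff_eq hden, orderFourCurve_negY_self]
  simp only [orderFourCurve_a₁, orderFourCurve_a₂, orderFourCurve_a₄]
  ring

lemma orderFourCurve_two_nsmul {h : (orderFourCurve α).Nonsingular α α}
    {h₀ : (orderFourCurve α).Nonsingular 0 0} (h2α : 2 * α ≠ 0) :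
    2 • Point.some α α h = Point.some 0 0 h₀ := by
  have hy : α ≠ (orderFourCurve α).negY α α := by
    rw [orderFourCurve_negY_self]
    contrapose! h2α
    linear_combination h2α
  have hX : (orderFourCurve α).addX α α ((orderFourCurve α).slope α α α α) = 0 := by
    rw [orderFourCurve_slope h2α, addX]
    simp only [orderFourCurve_a₁, orderFourCurve_a₂]
    ring
  have hY : (orderFourCurve α).addY α α α ((orderFourCurve α).slope α α α α) = 0 := by
    rw [addY, negAddY, hX, orderFourCurve_slope h2α, negY]
    simp only [orderFourCurve_a₁, orderFourCurve_a₃]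
    ring
  rw [two_nsmul, Point.add_self_of_Y_ne hy]
  simp only [hX, hY]

end WeierstrassCurve.Affine

open scoped Classical in
open WeierstrassCurve.Affine in
/-- **The second `m = 4` family of Table 2 ([FMW, Lem. 3.1]).** On the nonsingular Weierstrass
curve `y² = x³ + (1 - 2α)x² + α²x`, the point `P = (α, α)` is a nonsingular point of exact
order 4, with `2P = (0, 0)`; in particular the `x`-coordinate of `2P` is `0`. -/
theorem order_four_family' {F : Type*} [Field F] (α : F)
    (W : WeierstrassCurve.Affine F)
    (hW : W = { a₁ := 0, a₂ := 1 - 2 * α, a₃ := 0, a₄ := α ^ 2, a₆ := 0 })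
    (hΔ : W.Δ ≠ 0) :
    ∃ h : W.Nonsingular α α, addOrderOf (WeierstrassCurve.Affine.Point.some α α h) = 4 ∧
      (∃ h₀ : W.Nonsingular 0 0,
        2 • WeierstrassCurve.Affine.Point.some α α h = WeierstrassCurve.Affine.Point.some 0 0 h₀) ∧
      ptX (2 • WeierstrassCurve.Affine.Point.some α α h) = 0 := by
  obtain rfl : W = orderFourCurve α := hW
  have h2α := two_mul_ne_zero_of_orderFourCurve_Δ_ne_zero α hΔ
  have h := (equation_iff_nonsingular_of_Δ_ne_zero hΔ).mp (orderFourCurve_equation α)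
  have h₀ := (equation_iff_nonsingular_of_Δ_ne_zero hΔ).mp (equation_zero.mpr rfl)
  have h2P : 2 • Point.some α α h = Point.some 0 0 h₀ := orderFourCurve_two_nsmul h2α
  have hT : 2 • Point.some 0 0 h₀ = 0 :=
    Point.two_nsmul_some_of_Y_eq (orderFourCurve_negY_zero α).symm
  refine ⟨h, addOrderOf_eq_four ?_ ?_, ⟨h₀, h2P⟩, by rw [h2P]; rfl⟩
  · exact h2P ▸ Point.some_ne_zero h₀
  · rw [h2P, hT]
end

section
/- Let F be a field and let α ∈ F be such that the Weierstrass curve E(α, α) : y² + (1 − α)xy − αy = x³ − αx² over F is nonsingular (i.e., its discriminant is nonzero). Then the point P = (0, 0) lies on E(α, α), has exact order 5 in the group of points E(α, α)(F), and the x-coordinate of 2P equals α. -/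
/-!
On the Tate normal form `E(b, c)` with `b ≠ 0`, the tangent at `P = (0, 0)` is `y = 0`, which gives
`2P = (b, bc)`. The chord through `P` and `2P` is `y = cx`; when `b = c` it is tangent to the curve
at `2P` (it cuts out `-x(x - b)²`), so `P + 2P + 2P = 0`, i.e. `3P = -2P`. Hence `5P = 0` with
`P ≠ 0`, and 5 is prime.
-/

open WeierstrassCurve WeierstrassCurve.Affine

namespace WeierstrassCurve

variable {F : Type*} [Field F] {b c : F}

/-- The curve `E(b, c)`. -/
def tateNormalForm (b c : F) : Affine F :=
  { a₁ := 1 - c, a₂ := -b, a₃ := -b, a₄ := 0, a₆ := 0 }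

lemma tateNormalForm_nonsingular_zero_zero_iff :
    (tateNormalForm b c).Nonsingular 0 0 ↔ b ≠ 0 := by
  simp [tateNormalForm]

lemma tateNormalForm_nonsingular_self_mul (hb : b ≠ 0) :
    (tateNormalForm b c).Nonsingular b (b * c) := by
  rw [nonsingular_iff, equation_iff]
  refine ⟨by simp only [tateNormalForm]; ring, ?_⟩
  by_cases hc : c = 0
  · left
    simp only [tateNormalForm, hc]
    intro h
    exact hb (pow_eq_zero_iff two_ne_zero |>.mp (by linear_combination -h))
  · right
    simp only [tateNormalForm]
    intro h
    exact mul_ne_zero hb hc (by linear_combination h)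

variable [DecidableEq F]

lemma tateNormalForm_two_nsmul (h₀ : (tateNormalForm b c).Nonsingular 0 0)
    (h₂ : (tateNormalForm b c).Nonsingular b (b * c)) :
    2 • Point.some 0 0 h₀ = Point.some b (b * c) h₂ := by
  have hb := tateNormalForm_nonsingular_zero_zero_iff.mp h₀
  have hy : (0 : F) ≠ (tateNormalForm b c).negY 0 0 := by
    simpa [negY, tateNormalForm] using hb.symm
  have hℓ : (tateNormalForm b c).slope 0 0 0 0 = 0 := by
    rw [slope_of_Y_ne rfl hy]
    simp [tateNormalForm]
  rw [two_nsmul, Point.add_self_of_Y_ne hy, Point.some.injEq]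
  simp only [addY, negAddY, addX, hℓ]
  simp only [negY, tateNormalForm]
  constructor <;> ring

lemma tateNormalForm_three_nsmul_eq_neg_two_nsmul (h₀ : (tateNormalForm b b).Nonsingular 0 0) :
    (3 • Point.some 0 0 h₀ : (tateNormalForm b b).Point) = -(2 • Point.some 0 0 h₀) := by
  have hb := tateNormalForm_nonsingular_zero_zero_iff.mp h₀
  have hℓ : (tateNormalForm b b).slope b 0 (b * b) 0 = b := by
    rw [slope_of_X_ne hb, sub_zero, sub_zero, mul_div_cancel_left₀ b hb]
  rw [succ_nsmul, tateNormalForm_two_nsmul h₀ (tateNormalForm_nonsingular_self_mul hb),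
    Point.add_of_X_ne hb, Point.neg_some, Point.some.injEq]
  simp only [addY, negAddY, addX, hℓ]
  simp only [negY, tateNormalForm]
  constructor <;> ring

lemma tateNormalForm_addOrderOf_eq_five (h₀ : (tateNormalForm b b).Nonsingular 0 0) :
    addOrderOf (Point.some 0 0 h₀) = 5 := by
  have : Fact (Nat.Prime 5) := ⟨Nat.prime_five⟩
  refine addOrderOf_eq_prime ?_ (Point.some_ne_zero h₀)
  rw [show (5 : ℕ) = 3 + 2 from rfl, add_nsmul, tateNormalForm_three_nsmul_eq_neg_two_nsmul,
    neg_add_cancel]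

end WeierstrassCurve

open Classical in
/-- **The `m = 5` family of Table 2.** On the nonsingular Weierstrass curve
`E(α, α) : y² + (1 - α)xy - αy = x³ - αx²`, the point `P = (0, 0)` is a nonsingular point of
exact order 5, and the `x`-coordinate of `2P` is `α`. -/
theorem order_five_family {F : Type*} [Field F] (α : F)
    (W : WeierstrassCurve.Affine F)
    (hW : W = { a₁ := 1 - α, a₂ := -α, a₃ := -α, a₄ := 0, a₆ := 0 })
    (hΔ : W.Δ ≠ 0) :
    ∃ h : W.Nonsingular 0 0, addOrderOf (WeierstrassCurve.Affine.Point.some 0 0 h) = 5 ∧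
      ptX (2 • WeierstrassCurve.Affine.Point.some 0 0 h) = α := by
  obtain rfl : W = tateNormalForm α α := hW
  have h₀ : (tateNormalForm α α).Nonsingular 0 0 :=
    (equation_iff_nonsingular_of_Δ_ne_zero hΔ).mp (equation_zero.mpr rfl)
  refine ⟨h₀, tateNormalForm_addOrderOf_eq_five h₀, ?_⟩
  rw [tateNormalForm_two_nsmul h₀ (tateNormalForm_nonsingular_self_mul
    (tateNormalForm_nonsingular_zero_zero_iff.mp h₀))]
  rfl
end
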